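/- Fix x₁,…,xₙ ∈ ℝ^d, y₁,…,yₙ ∈ ℝ, K ∈ ℕ, c₁ > 0, and let σ be the logistic sigmoid. For weights a ∈ ℝ^{K+1}, b ∈ ℝ^{K(d+1)} define f_{a,b}(x) = Σ_{k=1}^K a_k·σ(Σ_{j=1}^d b_{k,j}x^{(j)} + b_{k,0}) + a₀ and F(a,b) = (1/n)Σ_{i=1}^n |f_{a,b}(x_i) − y_i|² + (c₁/n)Σ_{k=0}^K a_k². Then for every k ∈ {1,…,K} and j ∈ {0,…,d}, |∂F/∂b_{k,j}(a,b)| ≤ 2·√(F(a,b))·max{1, max_{i,l}|x_i^{(l)}|}·|a_k|·exp(−min_{i=1,…,n} |Σ_{j=1}^d b_{k,j}x_i^{(j)} + b_{k,0}|). -/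

import Mathlib

/-!
Along the coordinate `b_{k,j}` only the `k`-th neuron moves, and its pre-activation at `x_i` is
affine in `b_{k,j}` with slope `x_i^{(j)}` (slope `1` for the bias `j = 0`). Hence
`∂F/∂b_{k,j} = (2/n) ∑ᵢ rᵢ a_k σ'(zᵢ) x_i^{(j)}` with residuals `rᵢ` and pre-activations `zᵢ`.
Each factor `a_k σ'(zᵢ) x_i^{(j)}` is bounded by `|a_k| e^{-minᵢ |zᵢ|} max(1, max |x|)`, and
`(1/n) ∑ |rᵢ| ≤ √((1/n) ∑ rᵢ²) ≤ √F` because the penalty is nonnegative.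
-/

open Finset Real Function

lemma sigmoid_le_exp (x : ℝ) : sigmoid x ≤ exp x :=
  calc sigmoid x ≤ (exp (-x))⁻¹ :=
        inv_anti₀ (exp_pos _) (le_add_of_nonneg_left zero_le_one)
    _ = exp x := by rw [exp_neg, inv_inv]

lemma sigmoid_mul_one_sub_sigmoid_le_exp_neg_abs (x : ℝ) :
    sigmoid x * (1 - sigmoid x) ≤ exp (-|x|) := by
  rw [← sigmoid_neg]
  rcases abs_cases x with ⟨hx, -⟩ | ⟨hx, -⟩
  · rw [hx]
    calc sigmoid x * sigmoid (-x) ≤ 1 * sigmoid (-x) := by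
          gcongr
          · exact sigmoid_nonneg _
          · exact sigmoid_le_one _
      _ ≤ exp (-x) := by rw [one_mul]; exact sigmoid_le_exp _
  · rw [hx, neg_neg]
    calc sigmoid x * sigmoid (-x) ≤ sigmoid x * 1 := by
          gcongr
          · exact sigmoid_nonneg _
          · exact sigmoid_le_one _
      _ ≤ exp x := by rw [mul_one]; exact sigmoid_le_exp _

lemma abs_mul_sigmoid_deriv_mul_le (α : ℝ) {z c m M : ℝ} (hm : m ≤ |z|) (hc : |c| ≤ M) :
    |α * (sigmoid z * (1 - sigmoid z)) * c| ≤ |α| * exp (-m) * M := by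
  have hσ' : sigmoid z * (1 - sigmoid z) ≤ exp (-m) :=
    (sigmoid_mul_one_sub_sigmoid_le_exp_neg_abs z).trans (exp_le_exp.mpr (neg_le_neg hm))
  rw [abs_mul, abs_mul,
    abs_of_nonneg (mul_nonneg (sigmoid_nonneg z) (sub_nonneg.mpr (sigmoid_le_one z)))]
  gcongr

lemma sum_abs_div_card_le_sqrt_sum_sq_div_card {ι : Type*} [Fintype ι] (f : ι → ℝ) :
    (∑ i, |f i|) / Fintype.card ι ≤ √((∑ i, f i ^ 2) / Fintype.card ι) := by
  have h := sum_div_card_sq_le_sum_sq_div_card (s := univ) (f := fun i => |f i|)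
  simp only [sq_abs, card_univ] at h
  exact (le_abs_self _).trans (abs_le_sqrt h)

lemma abs_deriv_sum_sq_div_card_add_const_le {ι : Type*} [Fintype ι] [Nonempty ι]
    (r : ι → ℝ → ℝ) (r' : ι → ℝ) (t₀ L C : ℝ)
    (hr : ∀ i, HasDerivAt (r i) (r' i) t₀) (hL : ∀ i, |r' i| ≤ L) :
    |deriv (fun t => (∑ i, r i t ^ 2) / Fintype.card ι + C) t₀|
      ≤ 2 * √((∑ i, r i t₀ ^ 2) / Fintype.card ι) * L := by
  have hderiv : HasDerivAt (fun t => (∑ i, r i t ^ 2) / Fintype.card ι + C)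
      ((∑ i, 2 * r i t₀ * r' i) / Fintype.card ι) t₀ := by
    exact (((HasDerivAt.fun_sum fun i _ => (hr i).fun_pow 2).div_const
      (Fintype.card ι : ℝ)).add_const C).congr_deriv (by simp)
  have hL0 : 0 ≤ L := (abs_nonneg _).trans (hL (Classical.arbitrary ι))
  rw [hderiv.deriv]
  calc |(∑ i, 2 * r i t₀ * r' i) / Fintype.card ι|
      ≤ (∑ i, 2 * |r i t₀| * L) / Fintype.card ι := by
        rw [abs_div, Nat.abs_cast]
        gcongr
        refine (abs_sum_le_sum_abs _ _).trans (sum_le_sum fun i _ => ?_)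
        rw [abs_mul, abs_mul, abs_two]
        gcongr
        exact hL i
    _ = 2 * ((∑ i, |r i t₀|) / Fintype.card ι) * L := by
        rw [← sum_mul, ← mul_sum]
        ring
    _ ≤ 2 * √((∑ i, r i t₀ ^ 2) / Fintype.card ι) * L := by
        gcongr
        exact sum_abs_div_card_le_sqrt_sum_sq_div_card _

section Network

variable {d K : ℕ}

noncomputable def preactivation (w : ℕ → ℝ) (x : Fin d → ℝ) : ℝ :=
  ∑ j : Fin d, w (j + 1) * x j + w 0

noncomputable def network (a : ℕ → ℝ) (b : Fin K → ℕ → ℝ) (x : Fin d → ℝ) : ℝ :=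
  ∑ k : Fin K, a (k + 1) * sigmoid (preactivation (b k) x) + a 0

/-- The coefficient of `w j` in `preactivation w x`. -/
def augmentedInput (x : Fin d → ℝ) : ℕ → ℝ
  | 0 => 1
  | j + 1 => if h : j < d then x ⟨j, h⟩ else 0

lemma abs_augmentedInput_le (x : Fin d → ℝ) (j : ℕ) {M : ℝ} (h1 : 1 ≤ M)
    (hx : ∀ l, |x l| ≤ M) : |augmentedInput x j| ≤ M := by
  rcases j with _ | j
  · simpa [augmentedInput] using h1
  · by_cases hj : j < d
    · simpa [augmentedInput, hj] using hx ⟨j, hj⟩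
    · simpa [augmentedInput, hj] using zero_le_one.trans h1

lemma preactivation_update (w : ℕ → ℝ) (x : Fin d → ℝ) (j : ℕ) (t : ℝ) :
    preactivation (update w j t) x = preactivation w x + (t - w j) * augmentedInput x j := by
  have hupdate : ∀ i, update w j t i = w i + if i = j then t - w j else 0 := by
    intro i
    by_cases h : i = j
    · subst h; simp
    · simp [h]
  simp only [preactivation, hupdate, add_mul, sum_add_distrib]
  rcases j with _ | j
  · simp [augmentedInput]
  · by_cases hj : j < d
    · have hiff : ∀ l : Fin d, (l : ℕ) = j ↔ l = ⟨j, hj⟩ := by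
        intro l; simp [Fin.ext_iff]
      simp [augmentedInput, hj, hiff]
      ring
    · have hne : ∀ l : Fin d, (l : ℕ) ≠ j := fun l h => hj (h ▸ l.isLt)
      simp [augmentedInput, hj, hne]

lemma network_update (a : ℕ → ℝ) (b : Fin K → ℕ → ℝ) (x : Fin d → ℝ) (k : Fin K)
    (v : ℕ → ℝ) :
    network a (update b k v) x = network a b x
      + a (k + 1) * (sigmoid (preactivation v x) - sigmoid (preactivation (b k) x)) := by
  simp only [network]
  rw [← add_sum_erase _ _ (mem_univ k), ← add_sum_erase _ _ (mem_univ k),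
    sum_congr rfl fun k' hk' => by rw [update_of_ne (mem_erase.mp hk').1], update_self]
  ring

lemma hasDerivAt_network_update (a : ℕ → ℝ) (b : Fin K → ℕ → ℝ) (x : Fin d → ℝ) (k : Fin K)
    (j : ℕ) :
    HasDerivAt (fun t => network a (update b k (update (b k) j t)) x)
      (a (k + 1) * (sigmoid (preactivation (b k) x) * (1 - sigmoid (preactivation (b k) x)))
        * augmentedInput x j) (b k j) := by
  have hpre : HasDerivAt (fun t => preactivation (b k) x + (t - b k j) * augmentedInput x j)
      (augmentedInput x j) (b k j) := by
    simpa using (((hasDerivAt_id (b k j)).sub_const (b k j)).mul_const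
      (augmentedInput x j)).const_add (preactivation (b k) x)
  have hsig := (hasDerivAt_sigmoid _).comp (b k j) hpre
  simp only [sub_self, zero_mul, add_zero] at hsig
  simp_rw [network_update, preactivation_update]
  refine (((hsig.sub_const _).const_mul (a (k + 1))).const_add (network a b x)).congr_deriv ?_
  ring

end Network

open Finset Real in
theorem partial_derivative_inner_weight_bound_general
    (n d K : ℕ) (hn : 0 < n) (hd : 0 < d)
    (x : Fin n → Fin d → ℝ) (y : Fin n → ℝ) (c₁ : ℝ) (hc₁ : 0 < c₁)
    (a : ℕ → ℝ) (b : Fin K → ℕ → ℝ)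
    (F : (Fin K → ℕ → ℝ) → ℝ)
    (hF : ∀ b' : Fin K → ℕ → ℝ, F b' =
      (1 / n) * ∑ i : Fin n,
        |(∑ k : Fin K, a (k + 1) *
            (1 / (1 + Real.exp (-((∑ j : Fin d, b' k (j + 1) * x i j) + b' k 0)))))
          + a 0 - y i| ^ 2
      + (c₁ / n) * ∑ k ∈ Finset.range (K + 1), (a k) ^ 2)
    (k : Fin K) (j : ℕ) :
    |deriv (fun t => F (Function.update b k (Function.update (b k) j t))) (b k j)|
      ≤ 2 * Real.sqrt (F b)
        * max 1 ((Finset.univ : Finset (Fin n × Fin d)).sup'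
            ⟨(⟨0, hn⟩, ⟨0, hd⟩), Finset.mem_univ _⟩ fun q => |x q.1 q.2|)
        * |a (k + 1)|
        * Real.exp (-((Finset.univ : Finset (Fin n)).inf' ⟨⟨0, hn⟩, Finset.mem_univ _⟩
            fun i => |(∑ j : Fin d, b k (j + 1) * x i j) + b k 0|)) := by
  have : Nonempty (Fin n) := ⟨⟨0, hn⟩⟩
  set M := max 1 ((Finset.univ : Finset (Fin n × Fin d)).sup'
    ⟨(⟨0, hn⟩, ⟨0, hd⟩), Finset.mem_univ _⟩ fun q => |x q.1 q.2|)
  set m := (Finset.univ : Finset (Fin n)).inf' ⟨⟨0, hn⟩, Finset.mem_univ _⟩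
    fun i => |(∑ j : Fin d, b k (j + 1) * x i j) + b k 0|
  have hrisk : ∀ b', F b' = (∑ i, (network a b' (x i) - y i) ^ 2) / n
      + (c₁ / n) * ∑ k ∈ range (K + 1), a k ^ 2 := by
    intro b'
    rw [hF b', one_div_mul_eq_div]
    simp only [sq_abs, network, preactivation, sigmoid_def, one_div]
  have hslope : ∀ i, |a (k + 1) * (sigmoid (preactivation (b k) (x i))
      * (1 - sigmoid (preactivation (b k) (x i)))) * augmentedInput (x i) j|
      ≤ |a (k + 1)| * exp (-m) * M := fun i =>
    abs_mul_sigmoid_deriv_mul_le _ (inf'_le _ (mem_univ i))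
      (abs_augmentedInput_le (x i) j (le_max_left _ _) fun l =>
        le_max_of_le_right (le_sup' (fun q : Fin n × Fin d => |x q.1 q.2|) (mem_univ (i, l))))
  have hmean : (∑ i, (network a b (x i) - y i) ^ 2) / n ≤ F b :=
    (hrisk b).symm ▸ le_add_of_nonneg_right (by positivity)
  have hbound := abs_deriv_sum_sq_div_card_add_const_le _ _ (b k j) _
    ((c₁ / n) * ∑ k ∈ range (K + 1), a k ^ 2)
    (fun i => (hasDerivAt_network_update a b (x i) k j).sub_const (y i)) hslope
  simp only [Fintype.card_fin, update_eq_self] at hbound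
  conv_lhs => simp only [hrisk]
  calc _ ≤ 2 * √((∑ i, (network a b (x i) - y i) ^ 2) / n) * (|a (k + 1)| * exp (-m) * M) :=
        hbound
    _ ≤ 2 * √(F b) * (|a (k + 1)| * exp (-m) * M) := by gcongr
    _ = _ := by ring

open Finset Real in
theorem partial_derivative_inner_weight_bound
    (n d K : ℕ) (hn : 0 < n) (hd : 0 < d)
    (x : Fin n → Fin d → ℝ) (y : Fin n → ℝ) (c₁ : ℝ) (hc₁ : 0 < c₁)
    (a : ℕ → ℝ) (b : Fin K → ℕ → ℝ)
    (F : (Fin K → ℕ → ℝ) → ℝ)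
    (hF : ∀ b' : Fin K → ℕ → ℝ, F b' =
      (1 / n) * ∑ i : Fin n,
        |(∑ k : Fin K, a (k + 1) *
            (1 / (1 + Real.exp (-((∑ j : Fin d, b' k (j + 1) * x i j) + b' k 0)))))
          + a 0 - y i| ^ 2
      + (c₁ / n) * ∑ k ∈ Finset.range (K + 1), (a k) ^ 2)
    (k : Fin K) (j : ℕ) (hj : j ≤ d) :
    |deriv (fun t => F (Function.update b k (Function.update (b k) j t))) (b k j)|
      ≤ 2 * Real.sqrt (F b)
        * max 1 ((Finset.univ : Finset (Fin n × Fin d)).sup'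
            ⟨(⟨0, hn⟩, ⟨0, hd⟩), Finset.mem_univ _⟩ fun q => |x q.1 q.2|)
        * |a (k + 1)|
        * Real.exp (-((Finset.univ : Finset (Fin n)).inf' ⟨⟨0, hn⟩, Finset.mem_univ _⟩
            fun i => |(∑ j : Fin d, b k (j + 1) * x i j) + b k 0|)) :=
  partial_derivative_inner_weight_bound_general n d K hn hd x y c₁ hc₁ a b F hF k j
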